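/- Let (X,d) be a locally compact, incomplete, rectifiably connected metric space which is quasihyperbolic a-John with center x0 ∈ X for some a ≥ 1. Let x ∈ X, let α be a quasihyperbolic geodesic between x and x0, and let y1, y2 be points on α such that d(u) ≤ 2·min{d(y1), d(y2)} for every u on the subarc α[y1,y2]. Then k(y1,y2) ≤ 3a·log(1+2a). -/

import Mathlib

open Set Metric MeasureTheory

noncomputable section

/-- The metric boundary of `X`: the complement of (the image of) `X` in its
metric completion `X̄`, i.e. `∂X = X̄ \ X`. -/
def mBoundary (X : Type*) [MetricSpace X] : Set (UniformSpace.Completion X) :=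
  (Set.range ((↑) : X → UniformSpace.Completion X))ᶜ

/-- `dB x` is the distance `d(x)` from `x` to the metric boundary `∂X`. -/
def dB {X : Type*} [MetricSpace X] (x : X) : ℝ :=
  Metric.infDist (x : UniformSpace.Completion X) (mBoundary X)

/-- `X` is rectifiably connected: any two points are joined by a curve of
finite length. -/
def RectifiablyConnected (X : Type*) [MetricSpace X] : Prop :=
  ∀ x y : X, ∃ (L : ℝ) (γ : ℝ → X), 0 ≤ L ∧ ContinuousOn γ (Set.Icc 0 L) ∧
    γ 0 = x ∧ γ L = y ∧ eVariationOn γ (Set.Icc 0 L) ≠ ⊤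

/-- `γ` is parametrized by arclength (w.r.t. `d`) on `[0, L]`: the length of
every subarc equals the length of its parameter interval. -/
def UnitSpeedOn {X : Type*} [MetricSpace X] (γ : ℝ → X) (L : ℝ) : Prop :=
  ∀ s ∈ Set.Icc (0:ℝ) L, ∀ t ∈ Set.Icc (0:ℝ) L, s ≤ t →
    eVariationOn γ (Set.Icc s t) = ENNReal.ofReal (t - s)

/-- The quasihyperbolic distance `k(x,y) = inf ∫_γ |dz| / d(z)`, the infimum
being over rectifiable curves joining `x` to `y`, which may be taken
parametrized by arclength (so the line integral is `∫ 1/d(γ(t)) dt`). -/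
def qhDist {X : Type*} [MetricSpace X] (x y : X) : ℝ :=
  sInf { r : ℝ | ∃ (L : ℝ) (γ : ℝ → X), 0 ≤ L ∧ UnitSpeedOn γ L ∧
    γ 0 = x ∧ γ L = y ∧ r = ∫ t in (0:ℝ)..L, 1 / dB (γ t) }

/-- The quasihyperbolic length `ℓ_k` of the subarc `γ[γ(s), γ(t)]` of an
arclength-parametrized curve `γ`. -/
def qhLen {X : Type*} [MetricSpace X] (γ : ℝ → X) (s t : ℝ) : ℝ :=
  ∫ u in s..t, 1 / dB (γ u)

/-- `γ : [0,T] → X` is a quasihyperbolic geodesic, i.e. a geodesic of `(X,k)`. -/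
def IsQHGeodesic {X : Type*} [MetricSpace X] (γ : ℝ → X) (T : ℝ) : Prop :=
  0 ≤ T ∧ ∀ s ∈ Set.Icc (0:ℝ) T, ∀ t ∈ Set.Icc (0:ℝ) T, qhDist (γ s) (γ t) = |s - t|

/-- The `a`-cone arc condition for a curve `γ : [0,L] → X`:
`ℓ(γ[γ(0), γ(t)]) ≤ a · d(γ(t))` for all `t`. -/
def IsConeArcOn {X : Type*} [MetricSpace X] (a : ℝ) (γ : ℝ → X) (L : ℝ) : Prop :=
  ∀ t ∈ Set.Icc (0:ℝ) L, eVariationOn γ (Set.Icc 0 t) ≤ ENNReal.ofReal (a * dB (γ t))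

/-- `X` is `a`-John with center `x0`: every point is joined to `x0` by an
`a`-cone arc. -/
def IsJohn (X : Type*) [MetricSpace X] (a : ℝ) (x0 : X) : Prop :=
  ∀ x : X, ∃ (L : ℝ) (γ : ℝ → X), 0 ≤ L ∧ ContinuousOn γ (Set.Icc 0 L) ∧
    Set.InjOn γ (Set.Icc 0 L) ∧ γ 0 = x ∧ γ L = x0 ∧ IsConeArcOn a γ L

/-- `X` is quasihyperbolic `a`-John with center `x0`: every quasihyperbolic
geodesic joining a point of `X` to `x0` is an `a`-cone arc. -/
def IsQHJohn {X : Type*} [MetricSpace X] (a : ℝ) (x0 : X) : Prop :=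
  ∀ (γ : ℝ → X) (T : ℝ), IsQHGeodesic γ T → γ T = x0 → IsConeArcOn a γ T

/-- The criterion of Theorem 1: for every quasihyperbolic geodesic `α` ending
at `x0` and points `y₁ = α(s)`, `y₂ = α(t)` on `α` such that
`d(u) ≤ 2 min (d y₁) (d y₂)` on the subarc `α[y₁,y₂]`, one has `k(y₁,y₂) ≤ A`. -/
def QHJohnCriterion {X : Type*} [MetricSpace X] (x0 : X) (A : ℝ) : Prop :=
  ∀ (α : ℝ → X) (T : ℝ), IsQHGeodesic α T → α T = x0 →
    ∀ s ∈ Set.Icc (0:ℝ) T, ∀ t ∈ Set.Icc (0:ℝ) T, s ≤ t →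
      (∀ u ∈ Set.Icc s t, dB (α u) ≤ 2 * min (dB (α s)) (dB (α t))) →
      qhDist (α s) (α t) ≤ A

/-- `X` is `c`-uniform: any `x, y` are joined by a curve that is `c`-quasiconvex
and satisfies the double cone condition. -/
def IsUniform (X : Type*) [MetricSpace X] (c : ℝ) : Prop :=
  ∀ x y : X, ∃ (L : ℝ) (γ : ℝ → X), 0 ≤ L ∧ ContinuousOn γ (Set.Icc 0 L) ∧
    γ 0 = x ∧ γ L = y ∧
    eVariationOn γ (Set.Icc 0 L) ≤ ENNReal.ofReal (c * dist x y) ∧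
    ∀ t ∈ Set.Icc (0:ℝ) L,
      min (eVariationOn γ (Set.Icc 0 t)) (eVariationOn γ (Set.Icc t L)) ≤
        ENNReal.ofReal (c * dB (γ t))

/-- `(X, k)` is Gromov `δ`-hyperbolic: every side of every quasihyperbolic
geodesic triangle lies in the `δ`-neighbourhood (w.r.t. `k`) of the union of
the other two sides. -/
def QHGromovHyperbolic (X : Type*) [MetricSpace X] (δ : ℝ) : Prop :=
  ∀ (γ₁ γ₂ γ₃ : ℝ → X) (T₁ T₂ T₃ : ℝ),
    IsQHGeodesic γ₁ T₁ → IsQHGeodesic γ₂ T₂ → IsQHGeodesic γ₃ T₃ →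
    γ₂ 0 = γ₁ T₁ → γ₃ 0 = γ₁ 0 → γ₃ T₃ = γ₂ T₂ →
    ∀ s ∈ Set.Icc (0:ℝ) T₁, ∃ t : ℝ,
      (t ∈ Set.Icc (0:ℝ) T₂ ∧ qhDist (γ₁ s) (γ₂ t) ≤ δ) ∨
      (t ∈ Set.Icc (0:ℝ) T₃ ∧ qhDist (γ₁ s) (γ₃ t) ≤ δ)

section Aux
variable {X : Type*} [MetricSpace X]

lemma dB_nonneg (x : X) : 0 ≤ dB x := Metric.infDist_nonneg

lemma dB_le_add_dist (x y : X) : dB x ≤ dB y + dist x y := by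
  have h := Metric.infDist_le_infDist_add_dist
    (x := (x : UniformSpace.Completion X)) (y := (y : UniformSpace.Completion X))
    (s := mBoundary X)
  rwa [UniformSpace.Completion.dist_eq] at h

lemma dB_pos [LocallyCompactSpace X] (hb : (mBoundary X).Nonempty) (x : X) : 0 < dB x := by
  obtain ⟨K, hK, hKmem⟩ := exists_compact_mem_nhds x
  obtain ⟨r, hr, hball⟩ := Metric.nhds_basis_closedBall.mem_iff.mp hKmem
  have hcb : IsCompact (Metric.closedBall x r) :=
    hK.of_isClosed_subset Metric.isClosed_closedBall hball
  have himg : IsCompact ((↑) '' Metric.closedBall x r :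
      Set (UniformSpace.Completion X)) :=
    hcb.image (UniformSpace.Completion.continuous_coe X)
  have hclosed := himg.isClosed
  -- ball around ↑x of radius r is inside the range
  have hsub : Metric.ball (x : UniformSpace.Completion X) r ⊆
      Set.range ((↑) : X → UniformSpace.Completion X) := by
    intro ξ hξ
    have hd : dist ξ (x : UniformSpace.Completion X) < r := Metric.mem_ball.mp hξ
    have hmem : ξ ∈ closure ((↑) '' Metric.closedBall x r :
        Set (UniformSpace.Completion X)) := by
      rw [_root_.mem_closure_iff]
      intro o ho hξo
      obtain ⟨ε', hε', hballo⟩ := Metric.isOpen_iff.mp ho ξ hξo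
      have hpos : 0 < min ε' (r - dist ξ (x : UniformSpace.Completion X)) := by
        apply lt_min hε'; linarith
      obtain ⟨z, hz⟩ := Metric.mem_closure_iff.mp
        (UniformSpace.Completion.denseRange_coe (x := ξ))
        _ hpos
      obtain ⟨y, rfl⟩ := hz.1
      refine ⟨(y : UniformSpace.Completion X), hballo ?_, ⟨y, ?_, rfl⟩⟩
      · exact Metric.mem_ball'.mpr (lt_of_lt_of_le hz.2 (min_le_left _ _))
      · have : dist (y : UniformSpace.Completion X) (x : UniformSpace.Completion X) < r := by
          have := hz.2
          have h2 : dist ξ (y : UniformSpace.Completion X)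
              < r - dist ξ (x : UniformSpace.Completion X) :=
            lt_of_lt_of_le this (min_le_right _ _)
          have := dist_triangle (y : UniformSpace.Completion X) ξ (x : UniformSpace.Completion X)
          rw [dist_comm ξ _] at h2
          linarith
        rw [UniformSpace.Completion.dist_eq] at this
        exact Metric.mem_closedBall.mpr this.le
    have := hclosed.closure_subset hmem
    obtain ⟨y, _, rfl⟩ := this
    exact ⟨y, rfl⟩
  have : r ≤ dB x := by
    by_contra hlt
    push_neg at hlt
    obtain ⟨ξ, hξ, hdlt⟩ := (Metric.infDist_lt_iff hb).mp hlt
    exact hξ (hsub (Metric.mem_ball'.mpr hdlt))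
  exact lt_of_lt_of_le hr this

end Aux
section Aux2
variable {X : Type*} [MetricSpace X]

lemma continuous_dB : Continuous (dB : X → ℝ) :=
  (Metric.continuous_infDist_pt (mBoundary X)).comp
    (UniformSpace.Completion.continuous_coe X)

lemma UnitSpeedOn.dist_le {γ : ℝ → X} {L : ℝ} (h : UnitSpeedOn γ L)
    {s t : ℝ} (hs : s ∈ Set.Icc (0:ℝ) L) (ht : t ∈ Set.Icc (0:ℝ) L) (hst : s ≤ t) :
    dist (γ s) (γ t) ≤ t - s := by
  have h1 : edist (γ s) (γ t) ≤ eVariationOn γ (Set.Icc s t) :=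
    eVariationOn.edist_le γ (Set.left_mem_Icc.mpr hst) (Set.right_mem_Icc.mpr hst)
  rw [h s hs t ht hst, edist_dist] at h1
  exact (ENNReal.ofReal_le_ofReal_iff (by linarith [hs.1, ht.1, hst])).mp h1

lemma UnitSpeedOn.continuousOn {γ : ℝ → X} {L : ℝ} (h : UnitSpeedOn γ L) :
    ContinuousOn γ (Set.Icc 0 L) := by
  intro u hu
  rw [Metric.continuousWithinAt_iff]
  intro ε hε
  refine ⟨ε, hε, fun v hv hdv => ?_⟩
  rw [Real.dist_eq] at hdv
  rcases le_total v u with hvu | hvu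
  · calc dist (γ v) (γ u) ≤ u - v := h.dist_le hv hu hvu
      _ ≤ |v - u| := by rw [abs_sub_comm]; exact le_abs_self _
      _ < ε := hdv
  · calc dist (γ v) (γ u) = dist (γ u) (γ v) := dist_comm _ _
      _ ≤ v - u := h.dist_le hu hv hvu
      _ ≤ |v - u| := le_abs_self _
      _ < ε := hdv

lemma contOn_inv_dB (hpos : ∀ z : X, 0 < dB z) {γ : ℝ → X} {s : Set ℝ}
    (hγ : ContinuousOn γ s) :
    ContinuousOn (fun t => 1 / dB (γ t)) s :=
  continuousOn_const.div (continuous_dB.comp_continuousOn hγ)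
    (fun t _ => (hpos (γ t)).ne')

lemma qhSet_nonneg {x y : X} :
    ∀ r ∈ {r : ℝ | ∃ (L : ℝ) (γ : ℝ → X), 0 ≤ L ∧ UnitSpeedOn γ L ∧
      γ 0 = x ∧ γ L = y ∧ r = ∫ t in (0:ℝ)..L, 1 / dB (γ t)}, 0 ≤ r := by
  rintro r ⟨L, γ, hL, _, _, _, rfl⟩
  apply intervalIntegral.integral_nonneg hL
  intro u _
  exact one_div_nonneg.mpr (dB_nonneg _)

lemma qhDist_lower (hpos : ∀ z : X, 0 < dB z) {x y : X}
    (hne : {r : ℝ | ∃ (L : ℝ) (γ : ℝ → X), 0 ≤ L ∧ UnitSpeedOn γ L ∧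
      γ 0 = x ∧ γ L = y ∧ r = ∫ t in (0:ℝ)..L, 1 / dB (γ t)}.Nonempty) :
    min (dist x y) (dB x) ≤ 2 * dB x * qhDist x y := by
  set d0 := dB x with hd0
  have hd0pos : 0 < d0 := hpos x
  have key : ∀ r ∈ {r : ℝ | ∃ (L : ℝ) (γ : ℝ → X), 0 ≤ L ∧ UnitSpeedOn γ L ∧
      γ 0 = x ∧ γ L = y ∧ r = ∫ t in (0:ℝ)..L, 1 / dB (γ t)},
      min (dist x y) d0 / (2 * d0) ≤ r := by
    rintro r ⟨L, γ, hL, hus, hγ0, hγL, rfl⟩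
    set m := min L d0 with hm
    have hm0 : 0 ≤ m := le_min hL hd0pos.le
    have hmL : m ≤ L := min_le_left _ _
    have hcont : ContinuousOn (fun t => 1 / dB (γ t)) (Set.Icc 0 L) :=
      contOn_inv_dB hpos hus.continuousOn
    have hint1 : IntervalIntegrable (fun t => 1 / dB (γ t)) MeasureTheory.volume 0 m :=
      (hcont.mono (by rw [Set.uIcc_of_le hm0]; exact Set.Icc_subset_Icc_right hmL)).intervalIntegrable
    have hint2 : IntervalIntegrable (fun t => 1 / dB (γ t)) MeasureTheory.volume m L :=
      (hcont.mono (by rw [Set.uIcc_of_le hmL]; exact Set.Icc_subset_Icc_left hm0)).intervalIntegrable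
    have hsplit : (∫ t in (0:ℝ)..m, 1 / dB (γ t)) + (∫ t in m..L, 1 / dB (γ t))
        = ∫ t in (0:ℝ)..L, 1 / dB (γ t) :=
      intervalIntegral.integral_add_adjacent_intervals hint1 hint2
    have h2 : 0 ≤ ∫ t in m..L, 1 / dB (γ t) := by
      apply intervalIntegral.integral_nonneg hmL
      intro u _
      exact one_div_nonneg.mpr (dB_nonneg _)
    have h1 : m / (2 * d0) ≤ ∫ t in (0:ℝ)..m, 1 / dB (γ t) := by
      have hconst : (∫ _ in (0:ℝ)..m, 1 / (2 * d0)) = m * (1 / (2 * d0)) := by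
        rw [intervalIntegral.integral_const, smul_eq_mul, sub_zero]
      have hmono : (∫ t in (0:ℝ)..m, 1 / (2 * d0)) ≤ ∫ t in (0:ℝ)..m, 1 / dB (γ t) := by
        apply intervalIntegral.integral_mono_on hm0 (by simp) hint1
        intro u hu
        have huL : u ∈ Set.Icc (0:ℝ) L := ⟨hu.1, hu.2.trans hmL⟩
        have hdb : dB (γ u) ≤ 2 * d0 := by
          have := dB_le_add_dist (γ u) (γ 0)
          have hdist : dist (γ u) (γ 0) ≤ u := by
            rw [dist_comm]
            simpa using hus.dist_le (Set.left_mem_Icc.mpr hL) huL hu.1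
          have hum : u ≤ d0 := hu.2.trans (min_le_right _ _)
          have he : dB (γ 0) = d0 := by rw [hγ0]
          rw [he] at this
          linarith
        exact one_div_le_one_div_of_le (hpos (γ u)) hdb
      calc m / (2 * d0) = m * (1 / (2 * d0)) := by ring
        _ = _ := hconst.symm
        _ ≤ _ := hmono
    have hmmin : min (dist x y) d0 ≤ m := by
      have hdistL : dist x y ≤ L := by
        have := hus.dist_le (Set.left_mem_Icc.mpr hL) (Set.right_mem_Icc.mpr hL) hL
        rw [hγ0, hγL] at this
        linarith
      exact min_le_min hdistL le_rfl
    have hdiv : min (dist x y) d0 / (2 * d0) ≤ m / (2 * d0) := by gcongr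
    linarith
  have hinf : min (dist x y) d0 / (2 * d0) ≤ qhDist x y := le_csInf hne key
  rw [div_le_iff₀ (by positivity : (0:ℝ) < 2 * d0)] at hinf
  linarith

end Aux2
section Aux3
variable {X : Type*} [MetricSpace X]

lemma IsQHGeodesic.dist_bound (hpos : ∀ z : X, 0 < dB z) {α : ℝ → X} {T : ℝ}
    (hg : IsQHGeodesic α T) {u v : ℝ} (hu : u ∈ Set.Icc 0 T) (hv : v ∈ Set.Icc 0 T) :
    min (dist (α u) (α v)) (dB (α u)) ≤ 2 * dB (α u) * |u - v| := by
  rcases eq_or_ne u v with rfl | hne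
  · simp [dist_self, min_eq_left (dB_nonneg (α u))]
  · have hq : qhDist (α u) (α v) = |u - v| := hg.2 u hu v hv
    have hqne : qhDist (α u) (α v) ≠ 0 := by
      rw [hq]; exact abs_ne_zero.mpr (sub_ne_zero.mpr hne)
    have hne' : {r : ℝ | ∃ (L : ℝ) (γ : ℝ → X), 0 ≤ L ∧ UnitSpeedOn γ L ∧
        γ 0 = α u ∧ γ L = α v ∧ r = ∫ t in (0:ℝ)..L, 1 / dB (γ t)}.Nonempty := by
      by_contra h
      rw [Set.not_nonempty_iff_eq_empty] at h
      apply hqne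
      show sInf _ = 0
      rw [h, Real.sInf_empty]
    have := qhDist_lower hpos hne'
    rwa [hq] at this

lemma IsQHGeodesic.continuousOn (hpos : ∀ z : X, 0 < dB z) {α : ℝ → X} {T : ℝ}
    (hg : IsQHGeodesic α T) : ContinuousOn α (Set.Icc 0 T) := by
  intro u hu
  rw [Metric.continuousWithinAt_iff]
  intro ε hε
  set d0 := dB (α u) with hd0
  have hd0pos : 0 < d0 := hpos _
  refine ⟨min ε d0 / (2 * d0), by positivity, fun v hv hdv => ?_⟩
  have hb := hg.dist_bound hpos hu hv
  rw [Real.dist_eq] at hdv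
  have h2 : 2 * d0 * |u - v| < min ε d0 := by
    rw [abs_sub_comm]
    have := mul_lt_mul_of_pos_left hdv (show (0:ℝ) < 2 * d0 by positivity)
    calc 2 * d0 * |v - u| < 2 * d0 * (min ε d0 / (2 * d0)) := this
      _ = min ε d0 := by field_simp
  have hlt : min (dist (α u) (α v)) d0 < min ε d0 := lt_of_le_of_lt hb h2
  rcases le_or_gt (dist (α u) (α v)) d0 with hc | hc
  · rw [min_eq_left hc] at hlt
    rw [dist_comm]
    exact lt_of_lt_of_le hlt (min_le_left _ _)
  · exfalso
    rw [min_eq_right hc.le] at hlt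
    exact absurd (lt_of_lt_of_le hlt (min_le_right _ _)) (lt_irrefl _)

lemma IsQHGeodesic.injOn {α : ℝ → X} {T : ℝ} (hg : IsQHGeodesic α T) :
    Set.InjOn α (Set.Icc 0 T) := by
  intro u hu v hv h
  have h1 : qhDist (α u) (α v) = |u - v| := hg.2 u hu v hv
  have h2 : qhDist (α u) (α v) = 0 := by
    rw [h]
    have := hg.2 v hv v hv
    simpa using this
  rw [h1] at h2
  exact sub_eq_zero.mp (abs_eq_zero.mp h2)

end Aux3
section Aux4
variable {X : Type*} [MetricSpace X]

lemma exists_variation_small {f : ℝ → X} {u w : ℝ} (huw : u < w)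
    (hfin : eVariationOn f (Set.Icc u w) ≠ ⊤) {ε : ℝ} (hε : 0 < ε)
    (hcont : ∀ z ∈ Set.Icc u w, dist (f z) (f u) ≤ ε) :
    ∃ v ∈ Set.Ioc u w, eVariationOn f (Set.Icc u v) ≤ ENNReal.ofReal (2 * ε) := by
  classical
  set V := eVariationOn f (Set.Icc u w) with hV
  by_cases hcase : V ≤ ENNReal.ofReal (2 * ε)
  · exact ⟨w, ⟨huw, le_refl w⟩, hcase⟩
  push_neg at hcase
  have hV0 : V ≠ 0 := by
    intro h; rw [h] at hcase; exact absurd hcase (by simp)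
  set ε' : ENNReal := ENNReal.ofReal ε with hε'
  have hε'0 : ε' ≠ 0 := by simp [hε', hε]
  have hε'le : ε' ≤ ENNReal.ofReal (2 * ε) := ENNReal.ofReal_le_ofReal (by linarith)
  have hsub : V - ε' < V := ENNReal.sub_lt_self hfin hV0 hε'0
  rw [hV, eVariationOn] at hsub
  obtain ⟨⟨n, ⟨q, hq_mono, hq_mem⟩⟩, hsum⟩ := lt_iSup_iff.mp hsub
  simp only at hsum
  have hVlt : V < (∑ i ∈ Finset.range n, edist (f (q (i + 1))) (f (q i))) + ε' := by
    rw [← ENNReal.sub_lt_iff_lt_right (by simp [hε']) (le_trans hε'le hcase.le)]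
    exact hsum
  by_cases hA : ∃ i, i ≤ n ∧ u < q i
  · obtain ⟨i0, hi0n, hi0⟩ := hA
    have hex : ∃ i, u < q i := ⟨i0, hi0⟩
    have hjex : ∃ j, j ≤ n ∧ u < q j ∧ ∀ i < j, q i = u := by
      refine ⟨Nat.find hex, (Nat.find_min' hex hi0).trans hi0n, Nat.find_spec hex, ?_⟩
      intro i hi
      have := Nat.find_min hex hi
      push_neg at this
      exact le_antisymm this (hq_mem i).1
    obtain ⟨j, hjn, hqj, hqlt⟩ := hjex
    -- split the sum at j
    have hsplit : (∑ i ∈ Finset.range n, edist (f (q (i + 1))) (f (q i)))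
        = (∑ i ∈ Finset.range j, edist (f (q (i + 1))) (f (q i)))
          + ∑ i ∈ Finset.Ico j n, edist (f (q (i + 1))) (f (q i)) := by
      rw [Finset.range_eq_Ico, Finset.range_eq_Ico]
      exact (Finset.sum_Ico_consecutive (fun i => edist (f (q (i + 1))) (f (q i))) (Nat.zero_le j) hjn).symm
    have hhead : (∑ i ∈ Finset.range j, edist (f (q (i + 1))) (f (q i)))
        ≤ edist (f (q j)) (f u) := by
      cases' j with k
      · simp
      · rw [Finset.sum_range_succ]
        have hzero : (∑ i ∈ Finset.range k, edist (f (q (i + 1))) (f (q i))) = 0 := by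
          apply Finset.sum_eq_zero
          intro i hi
          rw [Finset.mem_range] at hi
          rw [hqlt i (by omega), hqlt (i+1) (by omega), edist_self]
        rw [hzero, zero_add, hqlt k (by omega)]
    have htail : (∑ i ∈ Finset.Ico j n, edist (f (q (i + 1))) (f (q i)))
        ≤ eVariationOn f (Set.Icc (q j) w) := by
      rw [Finset.sum_Ico_eq_sum_range]
      have := eVariationOn.sum_le (f := f) (n := n - j) (u := fun i => q (j + i))
        (fun x y hxy => hq_mono (by omega))
        (fun i => show q (j + i) ∈ Set.Icc (q j) w from
          ⟨hq_mono (Nat.le_add_right j i), (hq_mem _).2⟩)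
      refine le_trans (le_of_eq ?_) this
      apply Finset.sum_congr rfl
      intro i _
      congr 1 <;> congr 1 <;> omega
    have hedist : edist (f (q j)) (f u) ≤ ε' := by
      rw [edist_dist]
      exact ENNReal.ofReal_le_ofReal (hcont _ (hq_mem j))
    set B := eVariationOn f (Set.Icc (q j) w) with hB
    have hBV : B ≤ V := eVariationOn.mono f (Set.Icc_subset_Icc_left hqj.le)
    have hBne : B ≠ ⊤ := fun h => hfin (top_le_iff.mp (h ▸ hBV))
    have hadd : eVariationOn f (Set.Icc u (q j)) + B = V := by
      have := eVariationOn.Icc_add_Icc f (s := (Set.univ : Set ℝ)) hqj.le (hq_mem j).2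
        (Set.mem_univ (q j))
      simpa only [Set.univ_inter] using this
    have hfinal : eVariationOn f (Set.Icc u (q j)) + B < (ε' + ε') + B := by
      rw [hadd]
      calc V < (∑ i ∈ Finset.range n, edist (f (q (i + 1))) (f (q i))) + ε' := hVlt
        _ ≤ (edist (f (q j)) (f u) + eVariationOn f (Set.Icc (q j) w)) + ε' := by
            rw [hsplit]; exact add_le_add_left (add_le_add hhead htail) _
        _ ≤ (ε' + B) + ε' := by rw [← hB]; exact add_le_add_left (add_le_add_left hedist _) _
        _ = (ε' + ε') + B := by ring
    have : eVariationOn f (Set.Icc u (q j)) < ε' + ε' :=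
      (ENNReal.add_lt_add_iff_right hBne).mp hfinal
    refine ⟨q j, ⟨hqj, (hq_mem j).2⟩, ?_⟩
    calc eVariationOn f (Set.Icc u (q j)) ≤ ε' + ε' := this.le
      _ = ENNReal.ofReal (2 * ε) := by
          rw [hε', ← ENNReal.ofReal_add hε.le hε.le]; ring_nf
  · push_neg at hA
    exfalso
    have hzero : (∑ i ∈ Finset.range n, edist (f (q (i + 1))) (f (q i))) = 0 := by
      apply Finset.sum_eq_zero
      intro i hi
      rw [Finset.mem_range] at hi
      have h1 : q i = u := le_antisymm (hA i (by omega)) (hq_mem i).1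
      have h2 : q (i+1) = u := le_antisymm (hA (i+1) (by omega)) (hq_mem (i+1)).1
      rw [h1, h2, edist_self]
    rw [hzero, zero_add] at hVlt
    exact absurd (lt_of_le_of_lt hε'le hcase) (not_lt.mpr hVlt.le)

lemma exists_variation_small_left {f : ℝ → X} {w u : ℝ} (hwu : w < u)
    (hfin : eVariationOn f (Set.Icc w u) ≠ ⊤) {ε : ℝ} (hε : 0 < ε)
    (hcont : ∀ z ∈ Set.Icc w u, dist (f z) (f u) ≤ ε) :
    ∃ v ∈ Set.Ico w u, eVariationOn f (Set.Icc v u) ≤ ENNReal.ofReal (2 * ε) := by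
  have hkey : ∀ p r : ℝ, eVariationOn (fun x => f (-x)) (Set.Icc p r)
      = eVariationOn f (Set.Icc (-r) (-p)) := by
    intro p r
    have h2 := eVariationOn.comp_eq_of_antitoneOn f (t := Set.Icc p r) (fun x => -x)
      (fun x _ y _ hxy => by simpa using hxy)
    rw [Set.image_neg_Icc] at h2
    exact h2
  have hfin' : eVariationOn (fun x => f (-x)) (Set.Icc (-u) (-w)) ≠ ⊤ := by
    rw [hkey]; simpa using hfin
  have hcont' : ∀ z ∈ Set.Icc (-u) (-w), dist (f (-z)) (f (-(-u))) ≤ ε := by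
    intro z hz
    simp only [neg_neg]
    have hzmem : -z ∈ Set.Icc w u := ⟨by linarith [hz.2], by linarith [hz.1]⟩
    exact hcont _ hzmem
  obtain ⟨v, hv, hvar⟩ := exists_variation_small (f := fun x => f (-x))
    (u := -u) (w := -w) (by linarith) hfin' hε hcont'
  refine ⟨-v, ⟨by linarith [hv.2], by linarith [hv.1]⟩, ?_⟩
  rw [hkey] at hvar
  simpa using hvar

end Aux4
/-- If `X` is quasihyperbolic `a`-John with center `x0`,
`α` is a quasihyperbolic geodesic between `x` and `x0`, and `y₁ = α(s)`,
`y₂ = α(t)` are points on `α` with `d(u) ≤ 2·min (d y₁) (d y₂)` for all `u` on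
the subarc `α[y₁,y₂]`, then `k(y₁,y₂) ≤ 3a·log(1+2a)`. -/
theorem qhJohn_geodesic_estimate {X : Type*} [MetricSpace X] [LocallyCompactSpace X]
    (hb : (mBoundary X).Nonempty) (hrc : RectifiablyConnected X)
    (x0 : X) (a : ℝ) (ha : 1 ≤ a) (hJ : IsQHJohn a x0) :
    QHJohnCriterion x0 (3 * a * Real.log (1 + 2 * a)) := by
  intro α T hgeo hend s hs t ht hst hdens
  have hpos : ∀ z : X, 0 < dB z := dB_pos hb
  have hcone : IsConeArcOn a α T := hJ α T hgeo hend
  have hstT : Set.Icc s t ⊆ Set.Icc 0 T := Set.Icc_subset_Icc hs.1 ht.2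
  have hαcont : ContinuousOn α (Set.Icc 0 T) := hgeo.continuousOn hpos
  have hinj : Set.InjOn α (Set.Icc 0 T) := hgeo.injOn
  -- finiteness of variation
  have hfin0 : ∀ u ∈ Set.Icc (0:ℝ) T, eVariationOn α (Set.Icc 0 u) ≠ ⊤ := by
    intro u hu h
    have := hcone u hu
    rw [h] at this
    exact ENNReal.ofReal_ne_top (top_le_iff.mp this)
  have hfin : ∀ u v : ℝ, u ∈ Set.Icc s t → v ∈ Set.Icc s t →
      eVariationOn α (Set.Icc u v) ≠ ⊤ := by
    intro u v hu hv h
    apply hfin0 v (hstT hv)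
    exact top_le_iff.mp (h ▸ eVariationOn.mono α (Set.Icc_subset_Icc (hs.1.trans hu.1) le_rfl))
  -- the variation function
  set φ : ℝ → ℝ := fun u => (eVariationOn α (Set.Icc s u)).toReal with hφdef
  have hφadd : ∀ u v : ℝ, u ∈ Set.Icc s t → v ∈ Set.Icc s t → u ≤ v →
      φ u + (eVariationOn α (Set.Icc u v)).toReal = φ v := by
    intro u v hu hv huv
    have h1 := eVariationOn.Icc_add_Icc α (s := (Set.univ : Set ℝ)) hu.1 huv (Set.mem_univ u)
    simp only [Set.univ_inter] at h1
    rw [hφdef]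
    simp only
    rw [← ENNReal.toReal_add (hfin s u ⟨le_rfl, hst⟩ hu) (hfin u v hu hv), h1]
  have hφs : φ s = 0 := by
    rw [hφdef]
    simp only
    rw [Set.Icc_self, eVariationOn.subsingleton α (Set.subsingleton_singleton)]
    simp
  have hφmono : ∀ u v : ℝ, u ∈ Set.Icc s t → v ∈ Set.Icc s t → u ≤ v → φ u ≤ φ v := by
    intro u v hu hv huv
    rw [← hφadd u v hu hv huv]
    have := ENNReal.toReal_nonneg (a := eVariationOn α (Set.Icc u v))
    linarith
  have hφstrict : ∀ u v : ℝ, u ∈ Set.Icc s t → v ∈ Set.Icc s t → u < v → φ u < φ v := by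
    intro u v hu hv huv
    rw [← hφadd u v hu hv huv.le]
    have hne : α u ≠ α v := fun h =>
      absurd (hinj (hstT hu) (hstT hv) h) huv.ne
    have hlow : edist (α u) (α v) ≤ eVariationOn α (Set.Icc u v) :=
      eVariationOn.edist_le α (Set.left_mem_Icc.mpr huv.le) (Set.right_mem_Icc.mpr huv.le)
    have hpos' : 0 < (eVariationOn α (Set.Icc u v)).toReal := by
      apply ENNReal.toReal_pos _ (hfin u v hu hv)
      intro h
      rw [h] at hlow
      exact hne (edist_eq_zero.mp (le_zero_iff.mp hlow))
    linarith
  have hφinj : ∀ u v : ℝ, u ∈ Set.Icc s t → v ∈ Set.Icc s t → φ u = φ v → u = v := by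
    intro u v hu hv h
    rcases lt_trichotomy u v with hlt | he | hlt
    · exact absurd h (hφstrict u v hu hv hlt).ne
    · exact he
    · exact absurd h.symm (hφstrict v u hv hu hlt).ne
  -- one-sided smallness of variation
  have hright : ∀ u ∈ Set.Ico s t, ∀ ε > (0:ℝ), ∃ v ∈ Set.Ioc u t,
      eVariationOn α (Set.Icc u v) ≤ ENNReal.ofReal ε := by
    intro u hu ε hε
    have huT : u ∈ Set.Icc 0 T := hstT ⟨hu.1, hu.2.le⟩
    have hcw := hαcont u huT
    rw [Metric.continuousWithinAt_iff] at hcw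
    obtain ⟨δ, hδ, hδp⟩ := hcw (ε/2) (by linarith)
    set w := min t (u + δ/2) with hw
    have huw : u < w := lt_min hu.2 (by linarith)
    have hwt : w ≤ t := min_le_left _ _
    have hcont' : ∀ z ∈ Set.Icc u w, dist (α z) (α u) ≤ ε/2 := by
      intro z hz
      have hzT : z ∈ Set.Icc 0 T := hstT ⟨hu.1.trans hz.1, hz.2.trans hwt⟩
      have : dist z u < δ := by
        rw [Real.dist_eq, abs_of_nonneg (by linarith [hz.1])]
        have := hz.2.trans (min_le_right t (u + δ/2))
        linarith
      exact (hδp hzT this).le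
    obtain ⟨v, hv, hvar⟩ := exists_variation_small huw
      (hfin u w ⟨hu.1, hu.2.le⟩ ⟨hu.1.trans huw.le, hwt⟩) (by linarith : (0:ℝ) < ε/2) hcont'
    refine ⟨v, ⟨hv.1, hv.2.trans hwt⟩, ?_⟩
    convert hvar using 2
    ring
  have hleft : ∀ u ∈ Set.Ioc s t, ∀ ε > (0:ℝ), ∃ v ∈ Set.Ico s u,
      eVariationOn α (Set.Icc v u) ≤ ENNReal.ofReal ε := by
    intro u hu ε hε
    have huT : u ∈ Set.Icc 0 T := hstT ⟨hu.1.le, hu.2⟩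
    have hcw := hαcont u huT
    rw [Metric.continuousWithinAt_iff] at hcw
    obtain ⟨δ, hδ, hδp⟩ := hcw (ε/2) (by linarith)
    set w := max s (u - δ/2) with hw
    have hwu : w < u := max_lt hu.1 (by linarith)
    have hsw : s ≤ w := le_max_left _ _
    have hcont' : ∀ z ∈ Set.Icc w u, dist (α z) (α u) ≤ ε/2 := by
      intro z hz
      have hzT : z ∈ Set.Icc 0 T := hstT ⟨hsw.trans hz.1, hz.2.trans hu.2⟩
      have : dist z u < δ := by
        rw [Real.dist_eq, abs_of_nonpos (by linarith [hz.2])]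
        have := (le_max_right s (u - δ/2)).trans hz.1
        linarith
      exact (hδp hzT this).le
    obtain ⟨v, hv, hvar⟩ := exists_variation_small_left hwu
      (hfin w u ⟨hsw, hwu.le.trans hu.2⟩ ⟨hu.1.le, hu.2⟩) (by linarith : (0:ℝ) < ε/2) hcont'
    refine ⟨v, ⟨hsw.trans hv.1, hv.2⟩, ?_⟩
    convert hvar using 2
    ring
  -- the inverse function
  set ℓ := φ t with hℓ
  have hℓ0 : 0 ≤ ℓ := ENNReal.toReal_nonneg
  set ψ : ℝ → ℝ := fun r => sSup {u : ℝ | u ∈ Set.Icc s t ∧ φ u ≤ r} with hψdef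
  have hsmem : ∀ r : ℝ, 0 ≤ r → s ∈ {u : ℝ | u ∈ Set.Icc s t ∧ φ u ≤ r} := by
    intro r hr
    exact ⟨⟨le_rfl, hst⟩, by rw [hφs]; exact hr⟩
  have hbdd : ∀ r : ℝ, BddAbove {u : ℝ | u ∈ Set.Icc s t ∧ φ u ≤ r} :=
    fun r => ⟨t, fun u hu => hu.1.2⟩
  have hψmem : ∀ r ∈ Set.Icc 0 ℓ, ψ r ∈ Set.Icc s t := by
    intro r hr
    constructor
    · exact le_csSup (hbdd r) (hsmem r hr.1)
    · exact csSup_le ⟨s, hsmem r hr.1⟩ (fun u hu => hu.1.2)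
  have hφψ : ∀ r ∈ Set.Icc 0 ℓ, φ (ψ r) = r := by
    intro r hr
    have hψr := hψmem r hr
    apply le_antisymm
    · by_contra hgt
      push_neg at hgt
      have hψs : s < ψ r := by
        rcases eq_or_lt_of_le hψr.1 with he | h
        · exfalso; rw [← he, hφs] at hgt; exact absurd hgt (not_lt.mpr hr.1)
        · exact h
      set c := φ (ψ r) - r with hc
      have hcpos : 0 < c := by simp [hc]; linarith
      obtain ⟨v, hv, hvar⟩ := hleft (ψ r) ⟨hψs, hψr.2⟩ c hcpos
      have hvmem : v ∈ Set.Icc s t := ⟨hv.1, hv.2.le.trans hψr.2⟩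
      have hφv : r ≤ φ v := by
        have hadd := hφadd v (ψ r) hvmem hψr hv.2.le
        have htr : (eVariationOn α (Set.Icc v (ψ r))).toReal ≤ c :=
          ENNReal.toReal_le_of_le_ofReal hcpos.le hvar
        linarith
      obtain ⟨u', hu', hvu'⟩ := exists_lt_of_lt_csSup ⟨s, hsmem r hr.1⟩
        (show v < ψ r from hv.2)
      have hu'le : u' ≤ ψ r := le_csSup (hbdd r) hu'
      have : r < φ u' := lt_of_le_of_lt hφv (hφstrict v u' hvmem hu'.1 hvu')
      exact absurd hu'.2 (not_le.mpr this)
    · by_contra hlt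
      push_neg at hlt
      have hψt : ψ r < t := by
        rcases eq_or_lt_of_le hψr.2 with he | h
        · exfalso; rw [he] at hlt; exact absurd hlt (not_lt.mpr hr.2)
        · exact h
      set c := r - φ (ψ r) with hc
      have hcpos : 0 < c := by simp [hc]; linarith
      obtain ⟨v, hv, hvar⟩ := hright (ψ r) ⟨hψr.1, hψt⟩ c hcpos
      have hvmem : v ∈ Set.Icc s t := ⟨hψr.1.trans hv.1.le, hv.2⟩
      have hφv : φ v ≤ r := by
        have hadd := hφadd (ψ r) v hψr hvmem hv.1.le
        have htr : (eVariationOn α (Set.Icc (ψ r) v)).toReal ≤ c :=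
          ENNReal.toReal_le_of_le_ofReal hcpos.le hvar
        linarith
      have : v ≤ ψ r := le_csSup (hbdd r) ⟨hvmem, hφv⟩
      exact absurd this (not_le.mpr hv.1)
  have hψmono : ∀ r1 r2 : ℝ, 0 ≤ r1 → r1 ≤ r2 → ψ r1 ≤ ψ r2 := by
    intro r1 r2 h1 h12
    apply csSup_le_csSup (hbdd r2) ⟨s, hsmem r1 h1⟩
    intro u hu
    exact ⟨hu.1, hu.2.trans h12⟩
  set γ : ℝ → X := fun r => α (ψ r) with hγdef
  have hψ0 : ψ 0 = s := by
    apply hφinj _ _ (hψmem 0 ⟨le_rfl, hℓ0⟩) ⟨le_rfl, hst⟩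
    rw [hφψ 0 ⟨le_rfl, hℓ0⟩, hφs]
  have hψℓ : ψ ℓ = t := by
    apply hφinj _ _ (hψmem ℓ ⟨hℓ0, le_rfl⟩) ⟨hst, le_rfl⟩
    rw [hφψ ℓ ⟨hℓ0, le_rfl⟩]
  -- unit speed
  have hunit : UnitSpeedOn γ ℓ := by
    intro r1 hr1 r2 hr2 hr12
    have h1 := hψmem r1 hr1
    have h2 := hψmem r2 hr2
    have himg : ψ '' Set.Icc r1 r2 = Set.Icc (ψ r1) (ψ r2) := by
      apply Set.Subset.antisymm
      · rintro _ ⟨r, hr, rfl⟩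
        exact ⟨hψmono r1 r hr1.1 hr.1, hψmono r r2 (hr1.1.trans hr.1) hr.2⟩
      · intro u hu
        have humem : u ∈ Set.Icc s t := ⟨h1.1.trans hu.1, hu.2.trans h2.2⟩
        have hφu1 : r1 ≤ φ u := by
          rw [← hφψ r1 hr1]
          exact hφmono _ _ h1 humem hu.1
        have hφu2 : φ u ≤ r2 := by
          rw [← hφψ r2 hr2]
          exact hφmono _ _ humem h2 hu.2
        have hmem2 : φ u ∈ Set.Icc 0 ℓ := ⟨hr1.1.trans hφu1, hφu2.trans hr2.2⟩
        refine ⟨φ u, ⟨hφu1, hφu2⟩, ?_⟩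
        exact hφinj _ _ (hψmem _ hmem2) humem (hφψ _ hmem2)
    have hψm : MonotoneOn ψ (Set.Icc r1 r2) := fun x hx y hy hxy =>
      hψmono x y (hr1.1.trans hx.1) hxy
    have hcomp := eVariationOn.comp_eq_of_monotoneOn α (t := Set.Icc r1 r2) ψ hψm
    rw [himg] at hcomp
    have hvar : eVariationOn α (Set.Icc (ψ r1) (ψ r2)) = ENNReal.ofReal (r2 - r1) := by
      have hadd := hφadd (ψ r1) (ψ r2) h1 h2 (hψmono r1 r2 hr1.1 hr12)
      rw [hφψ r1 hr1, hφψ r2 hr2] at hadd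
      have hne := hfin (ψ r1) (ψ r2) h1 h2
      rw [← ENNReal.ofReal_toReal hne]
      congr 1
      linarith
    calc eVariationOn γ (Set.Icc r1 r2) = eVariationOn (α ∘ ψ) (Set.Icc r1 r2) := rfl
      _ = eVariationOn α (Set.Icc (ψ r1) (ψ r2)) := hcomp
      _ = ENNReal.ofReal (r2 - r1) := hvar
  have hγ0 : γ 0 = α s := by rw [hγdef]; simp only; rw [hψ0]
  have hγℓ : γ ℓ = α t := by rw [hγdef]; simp only; rw [hψℓ]
  -- bound the integral
  set d1 := dB (α s) with hd1
  have hd1pos : 0 < d1 := hpos _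
  have hγcont : ContinuousOn γ (Set.Icc 0 ℓ) := hunit.continuousOn
  have hℓbound : ℓ ≤ 2 * a * d1 := by
    have h1 : eVariationOn α (Set.Icc s t) ≤ eVariationOn α (Set.Icc 0 t) :=
      eVariationOn.mono α (Set.Icc_subset_Icc hs.1 le_rfl)
    have h2 := hcone t ht
    have h3 : ℓ ≤ a * dB (α t) :=
      ENNReal.toReal_le_of_le_ofReal (by nlinarith [dB_nonneg (α t)]) (h1.trans h2)
    have h4 : dB (α t) ≤ 2 * d1 := by
      have := hdens t ⟨hst, le_rfl⟩
      have hmin : min (dB (α s)) (dB (α t)) ≤ dB (α s) := min_le_left _ _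
      rw [← hd1] at *
      linarith
    nlinarith
  have hlow1 : ∀ r ∈ Set.Icc 0 ℓ, d1 - r ≤ dB (γ r) := by
    intro r hr
    have hd : dist (γ 0) (γ r) ≤ r := by
      have := hunit.dist_le (Set.left_mem_Icc.mpr hℓ0) hr hr.1
      linarith
    have := dB_le_add_dist (γ 0) (γ r)
    rw [hγ0, ← hd1] at this
    rw [hγ0] at hd
    linarith
  have hlow2 : ∀ r ∈ Set.Icc 0 ℓ, r / a ≤ dB (γ r) := by
    intro r hr
    have hψr := hψmem r hr
    have h1 : eVariationOn α (Set.Icc s (ψ r)) ≤ eVariationOn α (Set.Icc 0 (ψ r)) :=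
      eVariationOn.mono α (Set.Icc_subset_Icc hs.1 le_rfl)
    have h2 := hcone (ψ r) (hstT hψr)
    have h3 : φ (ψ r) ≤ a * dB (α (ψ r)) :=
      ENNReal.toReal_le_of_le_ofReal (by nlinarith [dB_nonneg (α (ψ r))]) (h1.trans h2)
    rw [hφψ r hr] at h3
    rw [div_le_iff₀ (by linarith : (0:ℝ) < a)]
    calc r ≤ a * dB (α (ψ r)) := h3
      _ = dB (γ r) * a := by rw [hγdef]; ring
  have hkey : ∀ r ∈ Set.Icc 0 ℓ, 1 / dB (γ r) ≤ (1 + 2*a) / (d1 + r) := by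
    intro r hr
    have hmax : d1 + r ≤ dB (γ r) * (1 + 2*a) := by
      rcases le_or_gt r (a * d1 / (1 + a)) with hc | hc
      · have h4 := hlow1 r hr
        have h5 : r * (1 + a) ≤ a * d1 := (le_div_iff₀ (by linarith : (0:ℝ) < 1 + a)).mp hc
        nlinarith [mul_le_mul_of_nonneg_right h4 (show (0:ℝ) ≤ 1 + 2*a by linarith)]
      · have h4 := hlow2 r hr
        have h5 : a * d1 ≤ r * (1 + a) := ((div_lt_iff₀ (by linarith : (0:ℝ) < 1 + a)).mp hc).le
        have h6 : r ≤ dB (γ r) * a := by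
          rw [div_le_iff₀ (by linarith : (0:ℝ) < a)] at h4; exact h4
        have h7 : a * (d1 + r) ≤ a * (dB (γ r) * (1 + 2*a)) := by
          nlinarith [mul_le_mul_of_nonneg_right h6 (show (0:ℝ) ≤ 1 + 2*a by linarith)]
        exact (mul_le_mul_iff_right₀ (by linarith : (0:ℝ) < a)).mp h7
    rw [div_le_div_iff₀ (hpos (γ r)) (by linarith [hr.1] : (0:ℝ) < d1 + r)]
    linarith
  -- conclude
  set rv := ∫ u in (0:ℝ)..ℓ, 1 / dB (γ u) with hrv
  have hint1 : IntervalIntegrable (fun u => 1 / dB (γ u)) MeasureTheory.volume 0 ℓ := by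
    apply ContinuousOn.intervalIntegrable
    rw [Set.uIcc_of_le hℓ0]
    exact contOn_inv_dB hpos hγcont
  have hint2 : IntervalIntegrable (fun u => (1 + 2*a) / (d1 + u)) MeasureTheory.volume 0 ℓ := by
    apply ContinuousOn.intervalIntegrable
    apply ContinuousOn.div continuousOn_const
      ((continuous_const.add continuous_id).continuousOn)
    intro u hu
    rw [Set.uIcc_of_le hℓ0] at hu
    have := hu.1
    exact (show (0:ℝ) < d1 + u by linarith).ne'
  have hmono : rv ≤ ∫ u in (0:ℝ)..ℓ, (1 + 2*a) / (d1 + u) := by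
    rw [hrv]
    exact intervalIntegral.integral_mono_on hℓ0 hint1 hint2 hkey
  have hcalc : (∫ u in (0:ℝ)..ℓ, (1 + 2*a) / (d1 + u))
      = (1 + 2*a) * Real.log ((d1 + ℓ) / d1) := by
    have heq : ∀ u : ℝ, (1 + 2*a) / (d1 + u) = (1 + 2*a) * (d1 + u)⁻¹ :=
      fun u => by rw [div_eq_mul_inv]
    simp_rw [heq]
    rw [intervalIntegral.integral_const_mul]
    congr 1
    have h8 := intervalIntegral.integral_comp_add_left (a := 0) (b := ℓ)
      (f := fun x => x⁻¹) d1
    rw [h8, add_zero]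
    exact integral_inv_of_pos hd1pos (by linarith)
  have hlog1 : Real.log ((d1 + ℓ) / d1) ≤ Real.log (1 + 2*a) := by
    apply Real.log_le_log (by positivity)
    rw [div_le_iff₀ hd1pos]
    nlinarith
  have hlog0 : 0 ≤ Real.log (1 + 2*a) := Real.log_nonneg (by linarith)
  have hrv_le : rv ≤ 3 * a * Real.log (1 + 2*a) := by
    calc rv ≤ (1 + 2*a) * Real.log ((d1 + ℓ) / d1) := by rw [← hcalc]; exact hmono
      _ ≤ (1 + 2*a) * Real.log (1 + 2*a) :=
          mul_le_mul_of_nonneg_left hlog1 (by linarith)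
      _ ≤ 3 * a * Real.log (1 + 2*a) := by nlinarith
  have hmem : rv ∈ {r : ℝ | ∃ (L : ℝ) (γ' : ℝ → X), 0 ≤ L ∧ UnitSpeedOn γ' L ∧
      γ' 0 = α s ∧ γ' L = α t ∧ r = ∫ u in (0:ℝ)..L, 1 / dB (γ' u)} :=
    ⟨ℓ, γ, hℓ0, hunit, hγ0, hγℓ, hrv⟩
  have hbddb : BddBelow {r : ℝ | ∃ (L : ℝ) (γ' : ℝ → X), 0 ≤ L ∧ UnitSpeedOn γ' L ∧
      γ' 0 = α s ∧ γ' L = α t ∧ r = ∫ u in (0:ℝ)..L, 1 / dB (γ' u)} :=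
    ⟨0, fun r hr => qhSet_nonneg r hr⟩
  calc qhDist (α s) (α t) ≤ rv := csInf_le hbddb hmem
    _ ≤ 3 * a * Real.log (1 + 2*a) := hrv_le
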